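/- arXiv:2605.08574 — 4 statements merged into one kernel-verified Lean document; each statement's English description precedes it below -/
import Mathlib

section
/- Let V be a finite set of size M, partitioned into U⁺ of size M − n and U⁻ of size n with 1 ≤ n, 1 ≤ M − n, and let g : V → ℝ. Define L_ReSIDe = (1/((M−n)·n)) Σ_{u⁺∈U⁺} Σ_{u⁻∈U⁻} ln(1 + exp(g(u⁻) − g(u⁺))) and Δ_sele = (1/M²) Σ_{u⁻∈U⁻} Σ_{u∈V} 𝟙[g(u⁻) ≥ g(u)]. Then Δ_sele ≤ ((M−n)·n / (M² · ln 2)) · L_ReSIDe + n² / M². -/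
lemma ind_le_log (q : ℝ) :
    (if 0 ≤ q then (1 : ℝ) else 0) ≤ Real.log (1 + Real.exp q) / Real.log 2 := by
  have hl2 : (0:ℝ) < Real.log 2 := Real.log_pos (by norm_num)
  by_cases h : 0 ≤ q
  · simp only [h, if_pos]
    rw [le_div_iff₀ hl2, one_mul]
    apply Real.log_le_log (by norm_num)
    have := Real.one_le_exp h
    linarith
  · simp only [h, if_neg, not_false_iff]
    apply div_nonneg _ hl2.le
    apply Real.log_nonneg
    have := Real.exp_pos q
    linarith

theorem sele_le_reside_bound {α : Type*} [DecidableEq α]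
    (V Up Um : Finset α) (M n : ℕ) (g : α → ℝ)
    (hpart : Up ∪ Um = V) (hdisj : Disjoint Up Um)
    (hV : V.card = M) (hUp : Up.card = M - n) (hUm : Um.card = n)
    (hn : 1 ≤ n) (hMn : 1 ≤ M - n) :
    (1 / ((M : ℝ) ^ 2)) *
      ∑ um ∈ Um, ∑ u ∈ V, (if g um ≥ g u then (1 : ℝ) else 0)
    ≤ (((M - n : ℕ) : ℝ) * (n : ℝ) / (((M : ℝ) ^ 2) * Real.log 2)) *
        ((1 / (((M - n : ℕ) : ℝ) * (n : ℝ))) *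
          ∑ up ∈ Up, ∑ um ∈ Um, Real.log (1 + Real.exp (g um - g up)))
      + (n : ℝ) ^ 2 / ((M : ℝ) ^ 2) := by
  have hl2 : (0:ℝ) < Real.log 2 := Real.log_pos (by norm_num)
  have hMpos : 0 < M := by omega
  have hM : (0:ℝ) < (M:ℝ)^2 := by positivity
  have hnR : ((n:ℝ)) ≠ 0 := by positivity
  have hMnR : (((M - n : ℕ) : ℝ)) ≠ 0 := by positivity
  -- simplify RHS coefficient
  have hrw : (((M - n : ℕ) : ℝ) * (n : ℝ) / (((M : ℝ) ^ 2) * Real.log 2)) *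
        ((1 / (((M - n : ℕ) : ℝ) * (n : ℝ))) *
          ∑ up ∈ Up, ∑ um ∈ Um, Real.log (1 + Real.exp (g um - g up)))
      = (∑ up ∈ Up, ∑ um ∈ Um, Real.log (1 + Real.exp (g um - g up))) /
          (((M : ℝ) ^ 2) * Real.log 2) := by
    field_simp
  rw [hrw]
  -- split the inner sum
  have hsplit : ∀ um, ∑ u ∈ V, (if g um ≥ g u then (1 : ℝ) else 0)
      = ∑ u ∈ Up, (if g um ≥ g u then (1 : ℝ) else 0)
        + ∑ u ∈ Um, (if g um ≥ g u then (1 : ℝ) else 0) := by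
    intro um
    rw [← hpart, Finset.sum_union hdisj]
  rw [Finset.sum_congr rfl (fun um _ => hsplit um), Finset.sum_add_distrib]
  have hbound1 : ∑ um ∈ Um, ∑ u ∈ Up, (if g um ≥ g u then (1 : ℝ) else 0)
      ≤ (∑ up ∈ Up, ∑ um ∈ Um, Real.log (1 + Real.exp (g um - g up))) / Real.log 2 := by
    rw [Finset.sum_comm, Finset.sum_div]
    apply Finset.sum_le_sum
    intro up _
    rw [Finset.sum_div]
    apply Finset.sum_le_sum
    intro um _
    have := ind_le_log (g um - g up)
    have heq : (if g um ≥ g up then (1:ℝ) else 0) = (if 0 ≤ g um - g up then (1:ℝ) else 0) := by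
      congr 1
      simp [ge_iff_le, sub_nonneg]
    rw [heq]
    exact this
  have hbound2 : ∑ um ∈ Um, ∑ u ∈ Um, (if g um ≥ g u then (1 : ℝ) else 0)
      ≤ (n:ℝ)^2 := by
    calc ∑ um ∈ Um, ∑ u ∈ Um, (if g um ≥ g u then (1 : ℝ) else 0)
        ≤ ∑ um ∈ Um, ∑ u ∈ Um, (1:ℝ) := by
          apply Finset.sum_le_sum; intro i _; apply Finset.sum_le_sum; intro j _
          split <;> norm_num
      _ = (n:ℝ)^2 := by simp [hUm]; ring
  rw [mul_add]
  have h1 : (1 / ((M : ℝ) ^ 2)) * ∑ um ∈ Um, ∑ u ∈ Up, (if g um ≥ g u then (1 : ℝ) else 0)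
      ≤ (∑ up ∈ Up, ∑ um ∈ Um, Real.log (1 + Real.exp (g um - g up))) /
          (((M : ℝ) ^ 2) * Real.log 2) := by
    calc (1 / ((M : ℝ) ^ 2)) * ∑ um ∈ Um, ∑ u ∈ Up, (if g um ≥ g u then (1 : ℝ) else 0)
        ≤ (1 / ((M : ℝ) ^ 2)) *
            ((∑ up ∈ Up, ∑ um ∈ Um, Real.log (1 + Real.exp (g um - g up))) / Real.log 2) :=
          mul_le_mul_of_nonneg_left hbound1 (by positivity)
      _ = (∑ up ∈ Up, ∑ um ∈ Um, Real.log (1 + Real.exp (g um - g up))) /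
          (((M : ℝ) ^ 2) * Real.log 2) := by ring
  have h2 : (1 / ((M : ℝ) ^ 2)) * ∑ um ∈ Um, ∑ u ∈ Um, (if g um ≥ g u then (1 : ℝ) else 0)
      ≤ (n:ℝ)^2 / ((M : ℝ) ^ 2) := by
    calc (1 / ((M : ℝ) ^ 2)) * ∑ um ∈ Um, ∑ u ∈ Um, (if g um ≥ g u then (1 : ℝ) else 0)
        ≤ (1 / ((M : ℝ) ^ 2)) * (n:ℝ)^2 := mul_le_mul_of_nonneg_left hbound2 (by positivity)
      _ = (n:ℝ)^2 / ((M : ℝ) ^ 2) := by ring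
  linarith
end

section
/- Let V be a finite set of size M partitioned into U⁺ (size M − n) and U⁻ (size n) with 1 ≤ n and 1 ≤ M − n, let g : V → ℝ be injective on U⁻, and define L_ReSIDe = (1/((M−n)·n)) Σ_{u⁺∈U⁺} Σ_{u⁻∈U⁻} ln(1 + exp(g(u⁻) − g(u⁺))) and Δ_sele = (1/M²) Σ_{u⁻∈U⁻} Σ_{u∈V} 𝟙[g(u⁻) ≥ g(u)]. Then Δ_sele ≤ ((M−n)·n / (M² ln 2)) · L_ReSIDe + n(n+1)/(2M²). -/
theorem sele_le_reside_tight_bound {α : Type*} [DecidableEq α]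
    (V Up Um : Finset α) (M n : ℕ) (g : α → ℝ)
    (hpart : Up ∪ Um = V) (hdisj : Disjoint Up Um)
    (hV : V.card = M) (hUp : Up.card = M - n) (hUm : Um.card = n)
    (hn : 1 ≤ n) (hMn : 1 ≤ M - n) (hinj : Set.InjOn g Um) :
    (1 / ((M : ℝ) ^ 2)) *
      ∑ um ∈ Um, ∑ u ∈ V, (if g um ≥ g u then (1 : ℝ) else 0)
    ≤ (((M - n : ℕ) : ℝ) * (n : ℝ) / (((M : ℝ) ^ 2) * Real.log 2)) *
        ((1 / (((M - n : ℕ) : ℝ) * (n : ℝ))) *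
          ∑ up ∈ Up, ∑ um ∈ Um, Real.log (1 + Real.exp (g um - g up)))
      + (n : ℝ) * ((n : ℝ) + 1) / (2 * (M : ℝ) ^ 2) := by
  have hlog2 : (0:ℝ) < Real.log 2 := Real.log_pos (by norm_num)
  have hM2 : 2 ≤ M := by omega
  have hMpos : (0:ℝ) < (M:ℝ) := by exact_mod_cast (by omega : 0 < M)
  have hnpos : (0:ℝ) < (n:ℝ) := by exact_mod_cast hn
  have hMnpos : (0:ℝ) < ((M - n : ℕ):ℝ) := by exact_mod_cast hMn
  set T := ∑ up ∈ Up, ∑ um ∈ Um, Real.log (1 + Real.exp (g um - g up)) with hT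
  -- bound on the Up part
  have hS1 : (∑ um ∈ Um, ∑ up ∈ Up, (if g um ≥ g up then (1:ℝ) else 0))
      ≤ T / Real.log 2 := by
    rw [hT, Finset.sum_comm, Finset.sum_div]
    refine Finset.sum_le_sum fun up _ => ?_
    rw [Finset.sum_div]
    refine Finset.sum_le_sum fun um _ => ?_
    have hexp : (0:ℝ) < Real.exp (g um - g up) := Real.exp_pos _
    by_cases h : g um ≥ g up
    · rw [if_pos h, le_div_iff₀ hlog2, one_mul]
      apply Real.log_le_log (by norm_num)
      have : (1:ℝ) ≤ Real.exp (g um - g up) := Real.one_le_exp (by linarith)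
      linarith
    · rw [if_neg h]
      have : (0:ℝ) ≤ Real.log (1 + Real.exp (g um - g up)) :=
        Real.log_nonneg (by linarith)
      positivity
  -- exact value of the Um part
  have hS2 : (∑ a ∈ Um, ∑ b ∈ Um, (if g a ≥ g b then (1:ℝ) else 0))
      = (n:ℝ) * ((n:ℝ) + 1) / 2 := by
    have key : ∀ a ∈ Um, ∀ b ∈ Um,
        (if g a ≥ g b then (1:ℝ) else 0) + (if g b ≥ g a then (1:ℝ) else 0)
        = if a = b then 2 else 1 := by
      intro a ha b hb
      by_cases hab : a = b
      · subst hab; norm_num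
      · have hne : g a ≠ g b := fun h => hab (hinj ha hb h)
        rw [if_neg hab]
        rcases lt_or_gt_of_ne hne with h | h
        · rw [if_neg (not_le.mpr h), if_pos h.le]; ring
        · rw [if_pos h.le, if_neg (not_le.mpr h)]; ring
    have hsym : (∑ a ∈ Um, ∑ b ∈ Um, (if g a ≥ g b then (1:ℝ) else 0))
        = ∑ a ∈ Um, ∑ b ∈ Um, (if g b ≥ g a then (1:ℝ) else 0) :=
      Finset.sum_comm
    have h2 : 2 * (∑ a ∈ Um, ∑ b ∈ Um, (if g a ≥ g b then (1:ℝ) else 0))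
        = (n:ℝ) * ((n:ℝ) + 1) := by
      have : 2 * (∑ a ∈ Um, ∑ b ∈ Um, (if g a ≥ g b then (1:ℝ) else 0))
          = ∑ a ∈ Um, ∑ b ∈ Um,
              ((if g a ≥ g b then (1:ℝ) else 0) + (if g b ≥ g a then (1:ℝ) else 0)) := by
        rw [two_mul]
        nth_rewrite 2 [hsym]
        rw [← Finset.sum_add_distrib]
        exact Finset.sum_congr rfl fun a _ => (Finset.sum_add_distrib).symm
      rw [this]
      have : ∀ a ∈ Um, (∑ b ∈ Um,
          ((if g a ≥ g b then (1:ℝ) else 0) + (if g b ≥ g a then (1:ℝ) else 0)))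
          = (n:ℝ) + 1 := by
        intro a ha
        rw [Finset.sum_congr rfl (key a ha)]
        have : (∑ b ∈ Um, (if a = b then (2:ℝ) else 1))
            = ∑ b ∈ Um, ((if a = b then (1:ℝ) else 0) + 1) := by
          refine Finset.sum_congr rfl fun b _ => ?_
          by_cases h : a = b <;> simp [h] <;> norm_num
        rw [this, Finset.sum_add_distrib, Finset.sum_ite_eq Um a (fun _ => (1:ℝ))]
        simp [ha, hUm]
        ring
      rw [Finset.sum_congr rfl this, Finset.sum_const, hUm, nsmul_eq_mul]
    linarith
  -- split the V sum
  have hsplit : (∑ um ∈ Um, ∑ u ∈ V, (if g um ≥ g u then (1:ℝ) else 0))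
      = (∑ um ∈ Um, ∑ u ∈ Up, (if g um ≥ g u then (1:ℝ) else 0))
        + (∑ um ∈ Um, ∑ u ∈ Um, (if g um ≥ g u then (1:ℝ) else 0)) := by
    rw [← Finset.sum_add_distrib]
    refine Finset.sum_congr rfl fun um _ => ?_
    rw [← hpart, Finset.sum_union hdisj]
  rw [hsplit, hS2]
  have hrhs : (((M - n : ℕ) : ℝ) * (n : ℝ) / (((M : ℝ) ^ 2) * Real.log 2)) *
        ((1 / (((M - n : ℕ) : ℝ) * (n : ℝ))) * T)
      = (T / Real.log 2) * (1 / (M:ℝ)^2) := by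
    field_simp
  rw [hrhs]
  have hfinal : (1 / ((M:ℝ)^2)) *
      ((∑ um ∈ Um, ∑ u ∈ Up, (if g um ≥ g u then (1:ℝ) else 0))
        + (n:ℝ) * ((n:ℝ) + 1) / 2)
      ≤ (T / Real.log 2) * (1 / (M:ℝ)^2) + (n:ℝ) * ((n:ℝ) + 1) / (2 * (M:ℝ)^2) := by
    have h1 : (0:ℝ) < 1 / (M:ℝ)^2 := by positivity
    have := mul_le_mul_of_nonneg_left hS1 h1.le
    calc (1 / ((M:ℝ)^2)) *
        ((∑ um ∈ Um, ∑ u ∈ Up, (if g um ≥ g u then (1:ℝ) else 0))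
          + (n:ℝ) * ((n:ℝ) + 1) / 2)
        = (1 / ((M:ℝ)^2)) * (∑ um ∈ Um, ∑ u ∈ Up, (if g um ≥ g u then (1:ℝ) else 0))
          + (n:ℝ) * ((n:ℝ) + 1) / (2 * (M:ℝ)^2) := by
          field_simp
      _ ≤ (1 / ((M:ℝ)^2)) * (T / Real.log 2)
          + (n:ℝ) * ((n:ℝ) + 1) / (2 * (M:ℝ)^2) := by linarith
      _ = (T / Real.log 2) * (1 / (M:ℝ)^2) + (n:ℝ) * ((n:ℝ) + 1) / (2 * (M:ℝ)^2) := by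
          ring
  exact hfinal
end

section
/- Let N ≥ 1, let e : Fin N → {0,1} be error flags, and suppose samples are sorted in decreasing confidence with all confidence scores distinct. Define the empirical AURC as AURC = (1/N) Σ_{k=1}^{N} ( (Σ_{i=1}^{k} e(i)) / k ). Then AURC is minimized over all permutations of the error flags exactly by those orderings in which all zeros (correct samples) precede all ones (errors); equivalently, for every ordering, AURC ≥ (1/N) Σ_{k=N−n+1}^{N} (k − (N − n))/k, where n = Σ_i e(i). -/
/-- Empirical AURC of an ordering of error flags: average over prefix lengths
`k = 1, …, N` of the error rate among the top-`k` samples. The `i`-th most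
confident sample under the ordering `σ` carries error flag `e (σ i)`. -/
noncomputable def aurc (N : ℕ) (e : Fin N → ℕ) (σ : Equiv.Perm (Fin N)) : ℝ :=
  (1 / (N : ℝ)) * ∑ k ∈ Finset.range N,
    ((∑ i : Fin N, if (i : ℕ) ≤ k then (e (σ i) : ℝ) else 0) / ((k : ℝ) + 1))

theorem aurc_lower_bound (N : ℕ) (hN : 1 ≤ N) (e : Fin N → ℕ)
    (he : ∀ i, e i = 0 ∨ e i = 1) (n : ℕ) (hn : n = ∑ i, e i)
    (σ : Equiv.Perm (Fin N)) :
    (1 / (N : ℝ)) * ∑ k ∈ Finset.Icc (N - n + 1) N,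
        (((k : ℝ) - ((N - n : ℕ) : ℝ)) / (k : ℝ))
      ≤ aurc N e σ := by
  set M := N - n with hM
  clear_value M
  -- key counting lemma: prefix of length k+1 contains at least k+1 - M errors
  have key : ∀ k, k < N →
      k + 1 - M ≤ ∑ i ∈ Finset.univ.filter (fun i : Fin N => (i:ℕ) ≤ k), e (σ i) := by
    intro k hk
    set F := Finset.univ.filter (fun i : Fin N => (i:ℕ) ≤ k) with hF
    have hcard : F.card = k + 1 := by
      have : F = Finset.Iic (⟨k, hk⟩ : Fin N) := by ext i; simp [hF, Fin.le_def]
      rw [this, Fin.card_Iic]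
    have hcompl : ∑ i ∈ Fᶜ, e (σ i) ≤ Fᶜ.card := by
      calc ∑ i ∈ Fᶜ, e (σ i) ≤ Fᶜ.card • 1 :=
            Finset.sum_le_card_nsmul _ _ 1 (fun i _ => (he (σ i)).elim (by omega) (by omega))
        _ = Fᶜ.card := by simp
    have hsplit : ∑ i ∈ F, e (σ i) + ∑ i ∈ Fᶜ, e (σ i) = n := by
      rw [Finset.sum_add_sum_compl, Equiv.sum_comp σ e, hn]
    have hccard : Fᶜ.card = N - (k + 1) := by
      rw [Finset.card_compl, hcard, Fintype.card_fin]
    omega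
  have hnN : n ≤ N := by
    rw [hn]
    calc ∑ i, e i ≤ ∑ _i : Fin N, 1 :=
          Finset.sum_le_sum (fun i _ => (he i).elim (by omega) (by omega))
      _ = N := by simp
  have hNpos : (0:ℝ) ≤ 1 / (N : ℝ) := by positivity
  unfold aurc
  apply mul_le_mul_of_nonneg_left _ hNpos
  -- rewrite LHS with nat subtraction
  have step1 : ∑ k ∈ Finset.Icc (M + 1) N, (((k : ℝ) - (M : ℝ)) / (k : ℝ))
      = ∑ k ∈ Finset.Icc (M + 1) N, (((k - M : ℕ) : ℝ) / (k : ℝ)) := by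
    refine Finset.sum_congr rfl fun k hk => ?_
    rw [Finset.mem_Icc] at hk
    have : M ≤ k := by omega
    rw [Nat.cast_sub this]
  rw [step1]
  have step2 : ∑ k ∈ Finset.Icc (M + 1) N, (((k - M : ℕ) : ℝ) / (k : ℝ))
      = ∑ k ∈ Finset.Icc 1 N, (((k - M : ℕ) : ℝ) / (k : ℝ)) := by
    refine Finset.sum_subset ?_ ?_
    · intro x hx; simp only [Finset.mem_Icc] at hx ⊢; omega
    · intro x hx hx'
      rw [Finset.mem_Icc] at hx hx'
      have : x - M = 0 := by omega
      rw [this]; simp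
  rw [step2]
  have step3 : Finset.Icc 1 N = Finset.map ⟨Nat.succ, Nat.succ_injective⟩ (Finset.range N) := by
    ext x
    simp only [Finset.mem_Icc, Finset.mem_map, Finset.mem_range,
      Function.Embedding.coeFn_mk, Nat.succ_eq_add_one]
    constructor
    · rintro ⟨h1, h2⟩; exact ⟨x - 1, by omega, by omega⟩
    · rintro ⟨a, ha, rfl⟩; omega
  rw [step3, Finset.sum_map]
  refine Finset.sum_le_sum fun k hk => ?_
  rw [Finset.mem_range] at hk
  have hS : ∑ i : Fin N, (if (i : ℕ) ≤ k then (e (σ i) : ℝ) else 0)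
      = ((∑ i ∈ Finset.univ.filter (fun i : Fin N => (i:ℕ) ≤ k), e (σ i) : ℕ) : ℝ) := by
    push_cast
    rw [Finset.sum_filter]
  rw [hS]
  simp only [Function.Embedding.coeFn_mk, Nat.succ_eq_add_one]
  have h1 : ((k+1 : ℕ) : ℝ) = (k:ℝ) + 1 := by push_cast; ring
  rw [h1]
  have hpos : (0:ℝ) < (k:ℝ) + 1 := by positivity
  gcongr
  exact_mod_cast key k hk
end

section
/- Let N ≥ 1 and let e : Fin N → {0,1} with n = Σ_i e(i) errors. For a uniformly random permutation σ of Fin N, the expected AURC, E[(1/N) Σ_{k=1}^{N} (1/k) Σ_{i=1}^{k} e(σ(i))], equals n/N, the empirical error rate. -/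
lemma sum_perm_apply {m : ℕ} (f : Fin (m + 1) → ℝ) (i : Fin (m + 1)) :
    ∑ σ : Equiv.Perm (Fin (m + 1)), f (σ i)
      = (Nat.factorial m : ℝ) * ∑ j, f j := by
  -- reduce to i = 0
  have h0 : ∑ σ : Equiv.Perm (Fin (m + 1)), f (σ i)
      = ∑ σ : Equiv.Perm (Fin (m + 1)), f (σ 0) := by
    refine Fintype.sum_bijective (fun σ => σ * Equiv.swap 0 i)
      (Group.mulRight_bijective _) _ _ (fun σ => ?_)
    simp [Equiv.Perm.mul_apply]
  rw [h0, ← Equiv.Perm.decomposeFin.symm.sum_comp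
      (fun σ => f (σ 0))]
  rw [Fintype.sum_prod_type]
  simp [Equiv.Perm.decomposeFin_symm_apply_zero, Finset.sum_const,
    Fintype.card_perm, Fintype.card_fin]
  rw [Finset.mul_sum]

theorem expected_aurc_random_ordering (N : ℕ) (hN : 1 ≤ N) (e : Fin N → ℕ)
    (he : ∀ i, e i = 0 ∨ e i = 1) (n : ℕ) (hn : n = ∑ i, e i) :
    (∑ σ : Equiv.Perm (Fin N), aurc N e σ) / (Nat.factorial N : ℝ)
      = (n : ℝ) / (N : ℝ) := by
  obtain ⟨m, rfl⟩ : ∃ m, N = m + 1 := ⟨N - 1, by omega⟩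
  have key : ∀ i : Fin (m + 1), ∑ σ : Equiv.Perm (Fin (m + 1)), (e (σ i) : ℝ)
      = (Nat.factorial m : ℝ) * n := by
    intro i
    rw [sum_perm_apply (fun j => (e j : ℝ)) i, hn]
    push_cast
    ring
  have hfact : (Nat.factorial (m + 1) : ℝ) = (m + 1) * Nat.factorial m := by
    push_cast [Nat.factorial_succ]; ring
  have hsum : ∑ σ : Equiv.Perm (Fin (m + 1)), aurc (m + 1) e σ
      = (Nat.factorial m : ℝ) * n := by
    unfold aurc
    rw [← Finset.mul_sum, Finset.sum_comm]
    have hterm : ∀ k ∈ Finset.range (m + 1),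
        ∑ σ : Equiv.Perm (Fin (m + 1)),
          (∑ i : Fin (m + 1), if (i : ℕ) ≤ k then (e (σ i) : ℝ) else 0) / ((k : ℝ) + 1)
        = (Nat.factorial m : ℝ) * n := by
      intro k hk
      rw [Finset.mem_range] at hk
      rw [← Finset.sum_div, Finset.sum_comm]
      have : ∀ i : Fin (m + 1), ∑ σ : Equiv.Perm (Fin (m + 1)),
          (if (i : ℕ) ≤ k then (e (σ i) : ℝ) else 0)
          = if (i : ℕ) ≤ k then (Nat.factorial m : ℝ) * n else 0 := by
        intro i
        by_cases h : (i : ℕ) ≤ k <;> simp [h, key i]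
      rw [Finset.sum_congr rfl (fun i _ => this i)]
      have hcount : ∑ i : Fin (m + 1), (if (i : ℕ) ≤ k then (Nat.factorial m : ℝ) * n else 0)
          = ((k : ℝ) + 1) * ((Nat.factorial m : ℝ) * n) := by
        rw [Fin.sum_univ_eq_sum_range (fun x => if x ≤ k then (Nat.factorial m : ℝ) * n else 0)]
        have hfil : (Finset.range (m + 1)).filter (fun x => x ≤ k) = Finset.range (k + 1) := by
          ext x; simp; omega
        rw [← Finset.sum_filter, hfil, Finset.sum_const, Finset.card_range, nsmul_eq_mul]
        push_cast; ring
      rw [hcount]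
      field_simp
    rw [Finset.sum_congr rfl hterm, Finset.sum_const, Finset.card_range]
    rw [nsmul_eq_mul]
    field_simp
  rw [hsum, hfact]
  field_simp
  push_cast
  ring
end
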